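/- arXiv:2508.06119 — 3 statements merged into one kernel-verified Lean document; each statement's English description precedes it below -/
import Mathlib

section
/- Let n ≥ 3, m ∈ ℕ, points x̄_1,…,x̄_m ∈ ℝ^n, and negative reals β_1,…,β_m with β := Σ_j β_j satisfying β + n - 2 > 0. Define W(x) = Π_{j=1}^m |x - x̄_j|^{β_j}. Then at every x distinct from all x̄_j, ΔW(x) ≤ (β + n - 2) Σ_{h=1}^m β_h Π_{i=1}^m |x - x̄_i|^{β_i - 2δ_{hi}}, and this bound is strictly negative (δ is the Kronecker delta). -/
/-!
With `W = ∏ⱼ ‖y - x̄ⱼ‖^βⱼ` and `G = ∇ log W = ∑ⱼ βⱼ (y - x̄ⱼ) / ‖y - x̄ⱼ‖²`, one has `∇W = W G` and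
`ΔW = W (‖G‖² + div G) = W (‖G‖² + (n - 2) ∑ⱼ βⱼ / ‖y - x̄ⱼ‖²)`. Since all `βⱼ ≤ 0`, the triangle
and Cauchy–Schwarz inequalities give `‖G‖² ≤ (∑ⱼ |βⱼ| / ‖y - x̄ⱼ‖)² ≤ β ∑ⱼ βⱼ / ‖y - x̄ⱼ‖²` with
`β = ∑ⱼ βⱼ`, and the right-hand side of the theorem is exactly `(β + n - 2) W ∑ⱼ βⱼ / ‖y - x̄ⱼ‖²`.
-/

open Real Finset

noncomputable def laplacian {n : ℕ} (f : EuclideanSpace ℝ (Fin n) → ℝ)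
    (x : EuclideanSpace ℝ (Fin n)) : ℝ :=
  ∑ i : Fin n, fderiv ℝ (fun y => fderiv ℝ f y (EuclideanSpace.single i 1)) x
    (EuclideanSpace.single i 1)

open scoped RealInnerProductSpace

section Calculus

variable {E : Type*} [NormedAddCommGroup E] [InnerProductSpace ℝ E]

theorem HasFDerivAt.finsetProd_of_eq_smul {ι : Type*} [DecidableEq ι] {u : Finset ι}
    {g : ι → E → ℝ} {L : ι → E →L[ℝ] ℝ} {x : E}
    (hg : ∀ i ∈ u, HasFDerivAt (g i) (g i x • L i) x) :
    HasFDerivAt (∏ i ∈ u, g i ·) ((∏ i ∈ u, g i x) • ∑ i ∈ u, L i) x := by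
  refine (HasFDerivAt.finsetProd hg).congr_fderiv ?_
  rw [smul_sum]
  refine sum_congr rfl fun i hi => ?_
  rw [smul_smul, prod_erase_mul _ _ hi]

theorem hasFDerivAt_norm_sub_rpow {c x : E} (hx : x ≠ c) (p : ℝ) :
    HasFDerivAt (fun y => ‖y - c‖ ^ p)
      (‖x - c‖ ^ p • (p * (‖x - c‖ ^ 2)⁻¹) • innerSL ℝ (x - c)) x := by
  have hr : 0 < ‖x - c‖ := norm_pos_iff.mpr (sub_ne_zero.mpr hx)
  have h := (((hasFDerivAt_id x).sub_const c).norm_sq).rpow_const (p := p / 2)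
    (Or.inl (by positivity))
  simp only [← Real.rpow_natCast_mul (norm_nonneg _), id] at h
  convert h using 1
  · ext y; push_cast; ring_nf
  · ext v
    simp only [map_sub, smul_apply, sub_apply, coe_innerSL_apply, smul_eq_mul, Nat.cast_ofNat,
      ContinuousLinearMap.comp_id, nsmul_eq_mul]
    rw [show (2 : ℝ) * (p / 2 - 1) = p - 2 by ring, Real.rpow_sub hr, Real.rpow_two]
    field_simp

theorem hasFDerivAt_inv_norm_sq_smul_sub {c x : E} (hx : x ≠ c) :
    HasFDerivAt (fun y => (‖y - c‖ ^ 2)⁻¹ • (y - c))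
      ((‖x - c‖ ^ 2)⁻¹ • ContinuousLinearMap.id ℝ E
        + (-(2 * ((‖x - c‖ ^ 2) ^ 2)⁻¹) • innerSL ℝ (x - c)).smulRight (x - c)) x := by
  have hr : ‖x - c‖ ^ 2 ≠ 0 := by positivity [sub_ne_zero.mpr hx]
  have hinv := (hasDerivAt_inv hr).comp_hasFDerivAt x ((hasFDerivAt_id x).sub_const c).norm_sq
  refine (hinv.smul ((hasFDerivAt_id x).sub_const c)).congr_fderiv ?_
  ext v
  simp only [id_eq, Function.comp_apply, ContinuousLinearMap.comp_id, neg_smul, add_apply,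
    smul_apply, ContinuousLinearMap.id_apply, ContinuousLinearMap.smulRight_apply, neg_apply,
    coe_innerSL_apply, nsmul_eq_mul, Nat.cast_ofNat, smul_eq_mul, add_right_inj, neg_inj]
  congr 1
  ring

variable {ι : Type*} [Fintype ι]

noncomputable def powerWeight (c : ι → E) (β : ι → ℝ) (y : E) : ℝ :=
  ∏ j, ‖y - c j‖ ^ β j

noncomputable def logGradient (c : ι → E) (β : ι → ℝ) (y : E) : E :=
  ∑ j, β j • (‖y - c j‖ ^ 2)⁻¹ • (y - c j)

theorem hasFDerivAt_powerWeight {c : ι → E} (β : ι → ℝ) {x : E} (hx : ∀ j, x ≠ c j) :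
    HasFDerivAt (powerWeight c β) (powerWeight c β x • innerSL ℝ (logGradient c β x)) x := by
  classical
  refine (HasFDerivAt.finsetProd_of_eq_smul (u := univ)
    fun j _ => hasFDerivAt_norm_sub_rpow (hx j) (β j)).congr_fderiv ?_
  unfold logGradient
  simp only [map_sum, map_smul, smul_smul]
  rfl

theorem fderiv_powerWeight_apply {c : ι → E} (β : ι → ℝ) {x : E} (hx : ∀ j, x ≠ c j) (v : E) :
    fderiv ℝ (powerWeight c β) x v = powerWeight c β x * ⟪logGradient c β x, v⟫ := by
  rw [(hasFDerivAt_powerWeight β hx).fderiv]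
  rfl

theorem hasFDerivAt_logGradient {c : ι → E} (β : ι → ℝ) {x : E} (hx : ∀ j, x ≠ c j) :
    HasFDerivAt (logGradient c β) (∑ j, β j • ((‖x - c j‖ ^ 2)⁻¹ • ContinuousLinearMap.id ℝ E
        + (-(2 * ((‖x - c j‖ ^ 2) ^ 2)⁻¹) • innerSL ℝ (x - c j)).smulRight (x - c j))) x :=
  HasFDerivAt.fun_sum fun j _ => (hasFDerivAt_inv_norm_sq_smul_sub (hx j)).const_smul (β j)

theorem fderiv_fderiv_powerWeight_apply {c : ι → E} (β : ι → ℝ) {x : E} (hx : ∀ j, x ≠ c j)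
    (v : E) :
    fderiv ℝ (fun y => fderiv ℝ (powerWeight c β) y v) x v =
      powerWeight c β x * (⟪logGradient c β x, v⟫ ^ 2 + ∑ j, β j *
        ((‖x - c j‖ ^ 2)⁻¹ * ‖v‖ ^ 2 - 2 * ((‖x - c j‖ ^ 2) ^ 2)⁻¹ * ⟪x - c j, v⟫ ^ 2)) := by
  have hev : (fun y => fderiv ℝ (powerWeight c β) y v) =ᶠ[nhds x]
      fun y => powerWeight c β y * ⟪logGradient c β y, v⟫ := by
    filter_upwards [Filter.eventually_all.2 fun j => eventually_ne_nhds (hx j)] with y hy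
    exact fderiv_powerWeight_apply β hy v
  rw [hev.fderiv_eq,
    ((hasFDerivAt_powerWeight β hx).fun_mul ((hasFDerivAt_logGradient β hx).inner ℝ
      (hasFDerivAt_const v x))).fderiv]
  simp only [neg_smul, smul_add, add_apply, smul_apply, ContinuousLinearMap.comp_apply,
    ContinuousLinearMap.prod_apply, _root_.sum_apply, ContinuousLinearMap.id_apply,
    ContinuousLinearMap.smulRight_apply, neg_apply, coe_innerSL_apply, smul_eq_mul, smul_neg,
    zero_apply, fderivInnerCLM_apply, inner_zero_right, sum_inner, inner_add_left,
    inner_smul_left, ringHom_apply, inner_neg_left, zero_add, real_inner_self_eq_norm_sq]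
  rw [mul_add, add_comm]
  congr 1
  · ring
  · exact congrArg _ (sum_congr rfl fun j _ => by ring)

end Calculus

theorem laplacian_powerWeight {n : ℕ} {ι : Type*} [Fintype ι] {c : ι → EuclideanSpace ℝ (Fin n)}
    (β : ι → ℝ) {x : EuclideanSpace ℝ (Fin n)} (hx : ∀ j, x ≠ c j) :
    laplacian (powerWeight c β) x = powerWeight c β x *
      (‖logGradient c β x‖ ^ 2 + (n - 2) * ∑ j, β j * (‖x - c j‖ ^ 2)⁻¹) := by
  simp only [laplacian, fderiv_fderiv_powerWeight_apply β hx, ← EuclideanSpace.basisFun_apply,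
    OrthonormalBasis.norm_eq_one, one_pow, mul_one, ← mul_sum, sum_add_distrib,
    OrthonormalBasis.sum_sq_inner_left]
  congr 2
  rw [Finset.sum_comm, mul_sum]
  refine sum_congr rfl fun j _ => ?_
  have hr : ‖x - c j‖ ≠ 0 := norm_ne_zero_iff.mpr (sub_ne_zero.mpr (hx j))
  rw [← mul_sum, sum_sub_distrib, ← mul_sum, OrthonormalBasis.sum_sq_inner_left, sum_const,
    card_univ, Fintype.card_fin, nsmul_eq_mul]
  field_simp

theorem norm_sum_smul_inv_norm_sq_smul_sq_le {F : Type*} [SeminormedAddCommGroup F]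
    [NormedSpace ℝ F] {ι : Type*} (s : Finset ι) (u : ι → F) {β : ι → ℝ}
    (hβ : ∀ i ∈ s, β i ≤ 0) :
    ‖∑ i ∈ s, β i • (‖u i‖ ^ 2)⁻¹ • u i‖ ^ 2 ≤
      (∑ i ∈ s, β i) * ∑ i ∈ s, β i * (‖u i‖ ^ 2)⁻¹ := by
  have hterm : ∀ i ∈ s, ‖β i • (‖u i‖ ^ 2)⁻¹ • u i‖ = -β i * ‖u i‖⁻¹ := fun i hi => by
    rw [norm_smul, norm_smul, Real.norm_of_nonpos (hβ i hi), norm_inv, norm_pow, norm_norm]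
    rcases eq_or_ne ‖u i‖ 0 with h | h
    · simp [h]
    · field_simp
  calc ‖∑ i ∈ s, β i • (‖u i‖ ^ 2)⁻¹ • u i‖ ^ 2 ≤ (∑ i ∈ s, -β i * ‖u i‖⁻¹) ^ 2 := by
        gcongr
        exact (norm_sum_le _ _).trans_eq (sum_congr rfl hterm)
    _ ≤ (∑ i ∈ s, -β i) * ∑ i ∈ s, -β i * (‖u i‖ ^ 2)⁻¹ := by
        refine sum_sq_le_sum_mul_sum_of_sq_le_mul s (fun i hi => neg_nonneg.mpr (hβ i hi))
          (fun i hi => mul_nonneg (neg_nonneg.mpr (hβ i hi)) (by positivity))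
          (fun i _ => le_of_eq (by ring))
    _ = (∑ i ∈ s, β i) * ∑ i ∈ s, β i * (‖u i‖ ^ 2)⁻¹ := by
        simp only [sum_neg_distrib, neg_mul, mul_neg, neg_neg]

theorem Finset.prod_rpow_sub_two_ite {ι : Type*} [Fintype ι] [DecidableEq ι] {r : ι → ℝ}
    (hr : ∀ i, 0 < r i) (β : ι → ℝ) (h : ι) :
    ∏ i, r i ^ (β i - 2 * if h = i then 1 else 0) = (∏ i, r i ^ β i) * (r h ^ 2)⁻¹ := by
  have hpow : ∀ i, r i ^ (2 * if h = i then (1 : ℝ) else 0) = if h = i then r i ^ 2 else 1 :=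
    fun i => by split_ifs <;> norm_num
  simp_rw [Real.rpow_sub (hr _), prod_div_distrib, hpow, prod_ite_eq, if_pos (mem_univ h),
    div_eq_mul_inv]

theorem stmt3_general (n m : ℕ) (hm : 0 < m)
    (xbar : Fin m → EuclideanSpace ℝ (Fin n)) (β : Fin m → ℝ)
    (hβ : ∀ j, β j < 0) (hsum : (∑ j, β j) + n - 2 > 0)
    (x : EuclideanSpace ℝ (Fin n)) (hx : ∀ j, x ≠ xbar j) :
    laplacian (fun y => ∏ j, ‖y - xbar j‖ ^ β j) x ≤
        ((∑ j, β j) + n - 2) *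
          ∑ h, β h * ∏ i, ‖x - xbar i‖ ^ (β i - 2 * (if h = i then 1 else 0)) ∧
      ((∑ j, β j) + n - 2) *
          ∑ h, β h * ∏ i, ‖x - xbar i‖ ^ (β i - 2 * (if h = i then 1 else 0)) < 0 := by
  have hr : ∀ j, 0 < ‖x - xbar j‖ := fun j => norm_pos_iff.mpr (sub_ne_zero.mpr (hx j))
  set W := powerWeight xbar β x with hW_def
  set S := ∑ j, β j * (‖x - xbar j‖ ^ 2)⁻¹ with hS_def
  have hW : 0 < W := prod_pos fun j _ => rpow_pos_of_pos (hr j) _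
  have hS : S < 0 :=
    sum_neg (fun j _ => mul_neg_of_neg_of_pos (hβ j) (inv_pos.mpr (pow_pos (hr j) 2)))
      (univ_nonempty_iff.mpr ⟨⟨0, hm⟩⟩)
  have hrhs : ∑ h, β h * ∏ i, ‖x - xbar i‖ ^ (β i - 2 * (if h = i then 1 else 0)) = W * S := by
    rw [hS_def, mul_sum]
    exact sum_congr rfl fun j _ => by rw [prod_rpow_sub_two_ite hr, hW_def, powerWeight]; ring
  rw [hrhs]
  refine ⟨?_, mul_neg_of_pos_of_neg hsum (mul_neg_of_pos_of_neg hW hS)⟩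
  calc laplacian (powerWeight xbar β) x = W * (‖logGradient xbar β x‖ ^ 2 + (n - 2) * S) :=
        laplacian_powerWeight β hx
    _ ≤ W * ((∑ j, β j) * S + (n - 2) * S) := by
        gcongr
        exact norm_sum_smul_inv_norm_sq_smul_sq_le univ (fun j => x - xbar j) fun j _ => (hβ j).le
    _ = ((∑ j, β j) + n - 2) * (W * S) := by ring

theorem stmt3 (n m : ℕ) (hn : 3 ≤ n) (hm : 0 < m)
    (xbar : Fin m → EuclideanSpace ℝ (Fin n)) (β : Fin m → ℝ)
    (hβ : ∀ j, β j < 0) (hsum : (∑ j, β j) + n - 2 > 0)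
    (x : EuclideanSpace ℝ (Fin n)) (hx : ∀ j, x ≠ xbar j) :
    laplacian (fun y => ∏ j, ‖y - xbar j‖ ^ β j) x ≤
        ((∑ j, β j) + n - 2) *
          ∑ h, β h * ∏ i, ‖x - xbar i‖ ^ (β i - 2 * (if h = i then 1 else 0)) ∧
      ((∑ j, β j) + n - 2) *
          ∑ h, β h * ∏ i, ‖x - xbar i‖ ^ (β i - 2 * (if h = i then 1 else 0)) < 0 :=
  stmt3_general n m hm xbar β hβ hsum x hx
end

section
/- Let n ≥ 3, p > n, α = 1 - n/p, x̄_1,…,x̄_m ∈ ℝ^n, α_j ≥ 0 with Σ_j α_j = α, and w(x) = Π_j |x - x̄_j|^{α_j}. Then w^p is a Muckenhoupt A_p weight on ℝ^n: there is C > 0 such that for every cube Q, ((1/|Q|)∫_Q w^p dx)((1/|Q|)∫_Q w^{-p/(p-1)} dx)^{p-1} ≤ C. -/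
/-! On a cube `Q` of side `r` and centre `c` every factor `‖x - x̄ⱼ‖` is at most
`√n (r + ‖c - x̄ⱼ‖)`, so the mean of `w ^ p` over `Q` is `≲ T ^ p` with
`T = ∏ⱼ (r + ‖c - x̄ⱼ‖) ^ aⱼ`. For the negative power `p' = p / (p - 1)`, Hölder's inequality
with the exponents `aⱼ / α` splits `w ^ (-p')` into the factors `‖x - x̄ⱼ‖ ^ (-γ)`,
`γ = α p' = (p - n) / (p - 1) < n`. Each of them has mean `≲ (r + ‖c - x̄ⱼ‖) ^ (-γ)` over `Q`:
far from `x̄ⱼ` pointwise, near `x̄ⱼ` by comparison with a ball, over which the integral scales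
like `ρ ^ (n - γ)` and is finite because `γ < n`. So the mean of `w ^ (-p')` is `≲ T ^ (-p')`,
and the powers of `T` cancel in the `A_p` product. -/

open Real MeasureTheory ENNReal

/-- The axis-parallel cube with center `c` and side length `r`. -/
def cube {n : ℕ} (c : EuclideanSpace ℝ (Fin n)) (r : ℝ) : Set (EuclideanSpace ℝ (Fin n)) :=
  {x | ∀ i, |x i - c i| ≤ r / 2}

open Metric Module

theorem Real.prod_rpow_rpow_neg_eq {ι : Type*} [Fintype ι] {u a : ι → ℝ} (hu : ∀ j, 0 ≤ u j)
    (ha : ∑ j, a j ≠ 0) (q : ℝ) :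
    (∏ j, u j ^ a j) ^ (-q) = ∏ j, (u j ^ (-(q * ∑ j, a j))) ^ (a j / ∑ j, a j) := by
  rw [← Real.finsetProd_rpow _ _ fun j _ => Real.rpow_nonneg (hu j) _]
  refine Finset.prod_congr rfl fun j _ => ?_
  rw [← Real.rpow_mul (hu j), ← Real.rpow_mul (hu j)]
  congr 1
  field_simp

theorem ENNReal.ofReal_prod_rpow {ι : Type*} [Fintype ι] {v θ : ι → ℝ} (hv : ∀ j, 0 ≤ v j)
    (hθ : ∀ j, 0 ≤ θ j) :
    ENNReal.ofReal (∏ j, v j ^ θ j) = ∏ j, ENNReal.ofReal (v j) ^ θ j := by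
  rw [ENNReal.ofReal_prod_of_nonneg fun j _ => Real.rpow_nonneg (hv j) _]
  exact Finset.prod_congr rfl fun j _ => (ENNReal.ofReal_rpow_of_nonneg (hv j) (hθ j)).symm

section Haar

variable {E : Type*} [NormedAddCommGroup E] [NormedSpace ℝ E] [FiniteDimensional ℝ E]
  [MeasurableSpace E] [BorelSpace E] (μ : Measure E) [μ.IsAddHaarMeasure]

theorem lintegral_comp_smul_of_pos (f : E → ℝ≥0∞) {R : ℝ} (hR : 0 < R) :
    ∫⁻ x, f (R • x) ∂μ = ENNReal.ofReal (R ^ finrank ℝ E)⁻¹ * ∫⁻ x, f x ∂μ := by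
  have he : MeasurableEmbedding (R • · : E → E) :=
    (Homeomorph.smul (Units.mk0 R hR.ne')).measurableEmbedding
  rw [← he.lintegral_map, Measure.map_addHaar_smul μ hR.ne', lintegral_smul_measure,
    abs_of_pos (by positivity), smul_eq_mul]

theorem setLIntegral_ball_norm_sub_rpow (γ : ℝ) (y : E) {ρ : ℝ} (hρ : 0 < ρ) :
    ∫⁻ x in ball y ρ, ENNReal.ofReal (‖x - y‖ ^ (-γ)) ∂μ
      = ENNReal.ofReal (ρ ^ ((finrank ℝ E : ℝ) - γ)) *
          ∫⁻ x in ball 0 1, ENNReal.ofReal (‖x‖ ^ (-γ)) ∂μ := by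
  set g : E → ℝ≥0∞ := fun x => ENNReal.ofReal (‖x‖ ^ (-γ))
  have hg : ∀ x, g (ρ • x) = ENNReal.ofReal (ρ ^ (-γ)) * g x := fun x => by
    simp only [g, norm_smul, Real.norm_of_nonneg hρ.le, Real.mul_rpow hρ.le (norm_nonneg _),
      ENNReal.ofReal_mul (Real.rpow_nonneg hρ.le _)]
  have htrans : ∫⁻ x in ball y ρ, g (x - y) ∂μ = ∫⁻ x in ball 0 ρ, g x ∂μ := by
    rw [← lintegral_indicator measurableSet_ball, ← lintegral_indicator measurableSet_ball,
      ← lintegral_sub_right_eq_self ((ball 0 ρ).indicator g) y]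
    congr 1 with x
    simp [Set.indicator, dist_eq_norm]
  have hscale : ∫⁻ x in ball 0 1, g (ρ • x) ∂μ
      = ENNReal.ofReal (ρ ^ finrank ℝ E)⁻¹ * ∫⁻ x in ball 0 ρ, g x ∂μ := by
    rw [← lintegral_indicator measurableSet_ball, ← lintegral_indicator measurableSet_ball,
      ← lintegral_comp_smul_of_pos μ _ hρ]
    congr 1 with x
    simp [Set.indicator, norm_smul, abs_of_pos hρ, hρ]
  have hρd : ENNReal.ofReal (ρ ^ finrank ℝ E) ≠ 0 := by simp [hρ]
  calc ∫⁻ x in ball y ρ, g (x - y) ∂μ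
      = ENNReal.ofReal (ρ ^ finrank ℝ E) *
          (ENNReal.ofReal (ρ ^ finrank ℝ E)⁻¹ * ∫⁻ x in ball 0 ρ, g x ∂μ) := by
        rw [htrans, ofReal_inv_of_pos (by positivity),
          ENNReal.mul_inv_cancel_left hρd ofReal_ne_top]
    _ = ENNReal.ofReal (ρ ^ ((finrank ℝ E : ℝ) - γ)) * ∫⁻ x in ball 0 1, g x ∂μ := by
        rw [← hscale]
        simp only [hg, lintegral_const_mul' _ _ ofReal_ne_top, ← mul_assoc,
          ← ENNReal.ofReal_mul (by positivity : (0:ℝ) ≤ ρ ^ finrank ℝ E)]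
        rw [← Real.rpow_natCast, ← Real.rpow_add hρ, sub_eq_add_neg]

theorem setLIntegral_unitBall_norm_rpow_lt_top (hd : 1 ≤ finrank ℝ E) {γ : ℝ}
    (hγ : γ < finrank ℝ E) : ∫⁻ x in ball 0 1, ENNReal.ofReal (‖x‖ ^ (-γ)) ∂μ < ∞ :=
  Integrable.lintegral_lt_top <| integrableOn_ball_of_norm_le_rpow (C := 1) hd hγ
    (ae_of_all _ fun x => by simp [abs_of_nonneg (Real.rpow_nonneg (norm_nonneg x) _)])
    (measurable_norm.pow_const _).aestronglyMeasurable

end Haar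

section Cube

variable {n : ℕ}

theorem cube_eq_preimage_Icc (c : EuclideanSpace ℝ (Fin n)) (r : ℝ) :
    cube c r = (MeasurableEquiv.toLp 2 (Fin n → ℝ)).symm ⁻¹'
      Set.Icc (fun i => c i - r / 2) (fun i => c i + r / 2) := by
  ext x
  have hx : ∀ i, (MeasurableEquiv.toLp 2 (Fin n → ℝ)).symm x i = x i := fun _ => rfl
  simp only [cube, hx, Set.mem_ofPred_eq, Set.mem_preimage, Set.mem_Icc, Pi.le_def, abs_le,
    forall_and]
  exact and_congr (forall_congr' fun i => ⟨fun h => by linarith, fun h => by linarith⟩)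
    (forall_congr' fun i => ⟨fun h => by linarith, fun h => by linarith⟩)

theorem measurableSet_cube (c : EuclideanSpace ℝ (Fin n)) (r : ℝ) : MeasurableSet (cube c r) := by
  rw [cube_eq_preimage_Icc]
  exact (MeasurableEquiv.toLp 2 (Fin n → ℝ)).symm.measurable measurableSet_Icc

theorem volume_cube (c : EuclideanSpace ℝ (Fin n)) {r : ℝ} (hr : 0 ≤ r) :
    volume (cube c r) = ENNReal.ofReal (r ^ n) := by
  rw [cube_eq_preimage_Icc, (EuclideanSpace.volume_preserving_symm_measurableEquiv_toLp
    (Fin n)).measure_preimage measurableSet_Icc.nullMeasurableSet, Real.volume_Icc_pi]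
  simp [ENNReal.ofReal_pow hr]

theorem norm_sub_center_le_of_mem_cube {c x : EuclideanSpace ℝ (Fin n)} {r : ℝ} (hr : 0 ≤ r)
    (hx : x ∈ cube c r) : ‖x - c‖ ≤ √n * (r / 2) := by
  rw [EuclideanSpace.norm_eq, ← Real.sqrt_sq (by positivity : 0 ≤ r / 2),
    ← Real.sqrt_mul n.cast_nonneg]
  refine Real.sqrt_le_sqrt ?_
  calc ∑ i, ‖(x - c) i‖ ^ 2 ≤ ∑ _i : Fin n, (r / 2) ^ 2 :=
        Finset.sum_le_sum fun i _ => by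
          simpa [Real.norm_eq_abs, sq_abs] using sq_le_sq' (abs_le.1 (hx i)).1 (abs_le.1 (hx i)).2
    _ = n * (r / 2) ^ 2 := by simp

theorem norm_sub_lt_of_mem_cube (hn : 0 < n) {c x : EuclideanSpace ℝ (Fin n)} {r : ℝ}
    (hr : 0 < r) (hx : x ∈ cube c r) (y : EuclideanSpace ℝ (Fin n)) :
    ‖x - y‖ < √n * (r + ‖c - y‖) := by
  have hs : 1 ≤ √n := Real.one_le_sqrt.2 (by exact_mod_cast hn)
  calc ‖x - y‖ ≤ ‖x - c‖ + ‖c - y‖ := norm_sub_le_norm_sub_add_norm_sub x c y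
    _ ≤ √n * (r / 2) + ‖c - y‖ := by gcongr; exact norm_sub_center_le_of_mem_cube hr.le hx
    _ < √n * (r + ‖c - y‖) := by nlinarith [norm_nonneg (c - y)]

theorem setLIntegral_cube_norm_sub_rpow_le_of_far (hn : 0 < n) {γ : ℝ} (hγ : 0 ≤ γ)
    {c y : EuclideanSpace ℝ (Fin n)} {r : ℝ} (hr : 0 < r) (hfar : √n * r ≤ ‖c - y‖) :
    ∫⁻ x in cube c r, ENNReal.ofReal (‖x - y‖ ^ (-γ))
      ≤ ENNReal.ofReal (4 ^ γ * r ^ n * (r + ‖c - y‖) ^ (-γ)) := by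
  set d := ‖c - y‖
  have hs : 1 ≤ √n := Real.one_le_sqrt.2 (by exact_mod_cast hn)
  have hlow : ∀ x ∈ cube c r, (r + d) / 4 ≤ ‖x - y‖ := fun x hx => by
    have hxc := norm_sub_center_le_of_mem_cube hr.le hx
    have htri := norm_sub_le_norm_sub_add_norm_sub c x y
    rw [norm_sub_rev c x] at htri
    nlinarith
  calc ∫⁻ x in cube c r, ENNReal.ofReal (‖x - y‖ ^ (-γ))
      ≤ ∫⁻ _ in cube c r, ENNReal.ofReal (((r + d) / 4) ^ (-γ)) :=
        setLIntegral_mono' (measurableSet_cube c r) fun x hx => ENNReal.ofReal_le_ofReal <|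
          Real.rpow_le_rpow_of_nonpos (by positivity) (hlow x hx) (neg_nonpos.2 hγ)
    _ = ENNReal.ofReal (4 ^ γ * r ^ n * (r + d) ^ (-γ)) := by
        rw [setLIntegral_const, volume_cube c hr.le, ← ENNReal.ofReal_mul (by positivity),
          Real.div_rpow (by positivity) (by norm_num), Real.rpow_neg (by norm_num : (0:ℝ) ≤ 4),
          div_inv_eq_mul]
        ring_nf

theorem exists_setLIntegral_cube_norm_sub_rpow_le (hn : 0 < n) {γ : ℝ} (hγ0 : 0 ≤ γ)
    (hγn : γ < n) :
    ∃ κ > 0, ∀ (c y : EuclideanSpace ℝ (Fin n)) (r : ℝ), 0 < r →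
      ∫⁻ x in cube c r, ENNReal.ofReal (‖x - y‖ ^ (-γ))
        ≤ ENNReal.ofReal (κ * r ^ n * (r + ‖c - y‖) ^ (-γ)) := by
  have hdim : finrank ℝ (EuclideanSpace ℝ (Fin n)) = n := finrank_euclideanSpace_fin
  set K := ∫⁻ x in ball (0 : EuclideanSpace ℝ (Fin n)) 1, ENNReal.ofReal (‖x‖ ^ (-γ))
  have hK : K ≠ ∞ := (setLIntegral_unitBall_norm_rpow_lt_top volume (by omega)
    (by rwa [hdim])).ne
  set κ₁ := K.toReal * √n ^ ((n : ℝ) - γ) * (1 + √n) ^ n with hκ₁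
  refine ⟨max κ₁ (4 ^ γ), lt_max_of_lt_right (by positivity), fun c y r hr => ?_⟩
  set d := ‖c - y‖
  have hmono : ∀ κ ≤ max κ₁ (4 ^ γ), ENNReal.ofReal (κ * r ^ n * (r + d) ^ (-γ))
      ≤ ENNReal.ofReal (max κ₁ (4 ^ γ) * r ^ n * (r + d) ^ (-γ)) := fun κ hκ => by
    gcongr
  rcases lt_or_ge d (√n * r) with hnear | hfar
  · refine le_trans ?_ (hmono κ₁ (le_max_left _ _))
    have hsub : cube c r ⊆ ball y (√n * (r + d)) := fun x hx =>
      mem_ball_iff_norm.2 (norm_sub_lt_of_mem_cube hn hr hx y)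
    calc ∫⁻ x in cube c r, ENNReal.ofReal (‖x - y‖ ^ (-γ))
        ≤ ∫⁻ x in ball y (√n * (r + d)), ENNReal.ofReal (‖x - y‖ ^ (-γ)) :=
          lintegral_mono_set hsub
      _ = ENNReal.ofReal ((√n * (r + d)) ^ ((n : ℝ) - γ)) * K := by
          rw [setLIntegral_ball_norm_sub_rpow volume γ y (by positivity), hdim]
      _ ≤ ENNReal.ofReal (κ₁ * r ^ n * (r + d) ^ (-γ)) := by
          rw [← ENNReal.ofReal_toReal hK, ← ENNReal.ofReal_mul (by positivity)]
          refine ENNReal.ofReal_le_ofReal ?_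
          have hrd : (r + d) ^ n ≤ ((1 + √n) * r) ^ n := by gcongr; linarith
          calc (√n * (r + d)) ^ ((n : ℝ) - γ) * K.toReal
              = K.toReal * √n ^ ((n : ℝ) - γ) * (r + d) ^ n * (r + d) ^ (-γ) := by
                have hrd0 : 0 < r + d := by positivity
                rw [Real.mul_rpow (by positivity) hrd0.le, Real.rpow_sub hrd0,
                  Real.rpow_neg hrd0.le, Real.rpow_natCast]
                ring
            _ ≤ K.toReal * √n ^ ((n : ℝ) - γ) * ((1 + √n) * r) ^ n * (r + d) ^ (-γ) := by
                gcongr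
            _ = κ₁ * r ^ n * (r + d) ^ (-γ) := by rw [hκ₁, mul_pow]; ring
  · exact (setLIntegral_cube_norm_sub_rpow_le_of_far hn hγ0 hr hfar).trans
      (hmono _ (le_max_right _ _))

end Cube

section Weight

variable {n : ℕ} {ι : Type*} [Fintype ι] (xbar : ι → EuclideanSpace ℝ (Fin n)) {a : ι → ℝ}

theorem prod_norm_sub_rpow_le_of_mem_cube (hn : 0 < n) (ha : ∀ j, 0 ≤ a j)
    {c x : EuclideanSpace ℝ (Fin n)} {r : ℝ} (hr : 0 < r) (hx : x ∈ cube c r) :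
    ∏ j, ‖x - xbar j‖ ^ a j ≤ √n ^ (∑ j, a j) * ∏ j, (r + ‖c - xbar j‖) ^ a j := by
  rw [Real.rpow_sum_of_pos (Real.sqrt_pos.2 (by exact_mod_cast hn)), ← Finset.prod_mul_distrib]
  refine Finset.prod_le_prod (fun j _ => by positivity) fun j _ => ?_
  rw [← Real.mul_rpow (by positivity) (by positivity)]
  exact Real.rpow_le_rpow (norm_nonneg _) (norm_sub_lt_of_mem_cube hn hr hx _).le (ha j)

theorem cube_mean_prod_rpow_le (hn : 0 < n) (ha : ∀ j, 0 ≤ a j) {q : ℝ} (hq : 0 ≤ q)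
    (c : EuclideanSpace ℝ (Fin n)) {r : ℝ} (hr : 0 < r) :
    (1 / r ^ n) * ∫ x in cube c r, (∏ j, ‖x - xbar j‖ ^ a j) ^ q
      ≤ (√n ^ (∑ j, a j) * ∏ j, (r + ‖c - xbar j‖) ^ a j) ^ q := by
  have hvol : volume.real (cube c r) = r ^ n := by
    rw [measureReal_def, volume_cube c hr.le, ENNReal.toReal_ofReal (by positivity)]
  rw [one_div, inv_mul_le_iff₀ (by positivity), mul_comm, ← hvol]
  refine (Real.le_norm_self _).trans <| norm_setIntegral_le_of_norm_le_const
    (by rw [volume_cube c hr.le]; exact ofReal_lt_top) fun x hx => ?_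
  rw [Real.norm_of_nonneg (by positivity)]
  exact Real.rpow_le_rpow (by positivity) (prod_norm_sub_rpow_le_of_mem_cube xbar hn ha hr hx) hq

theorem exists_cube_mean_prod_rpow_neg_le (hn : 0 < n) (ha : ∀ j, 0 ≤ a j)
    (hα : 0 < ∑ j, a j) {q : ℝ} (hq : 0 < q) (hqn : q * ∑ j, a j < n) :
    ∃ κ > 0, ∀ (c : EuclideanSpace ℝ (Fin n)) (r : ℝ), 0 < r →
      (1 / r ^ n) * ∫ x in cube c r, (∏ j, ‖x - xbar j‖ ^ a j) ^ (-q)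
        ≤ κ * (∏ j, (r + ‖c - xbar j‖) ^ a j) ^ (-q) := by
  set α := ∑ j, a j
  obtain ⟨κ, hκ, hcube⟩ := exists_setLIntegral_cube_norm_sub_rpow_le hn (by positivity) hqn
  refine ⟨κ, hκ, fun c r hr => ?_⟩
  have hθ : ∑ j, a j / α = 1 := by rw [← Finset.sum_div, div_self hα.ne']
  have hθ0 : ∀ j, 0 ≤ a j / α := fun j => div_nonneg (ha j) hα.le
  have hL : ∫⁻ x in cube c r, ENNReal.ofReal ((∏ j, ‖x - xbar j‖ ^ a j) ^ (-q))
      ≤ ENNReal.ofReal (κ * r ^ n * (∏ j, (r + ‖c - xbar j‖) ^ a j) ^ (-q)) :=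
    calc ∫⁻ x in cube c r, ENNReal.ofReal ((∏ j, ‖x - xbar j‖ ^ a j) ^ (-q))
        = ∫⁻ x in cube c r, ∏ j, ENNReal.ofReal (‖x - xbar j‖ ^ (-(q * α))) ^ (a j / α) := by
          congr 1 with x
          rw [Real.prod_rpow_rpow_neg_eq (fun j => norm_nonneg _) hα.ne',
            ENNReal.ofReal_prod_rpow (fun j => by positivity) hθ0]
      _ ≤ ∏ j, (∫⁻ x in cube c r, ENNReal.ofReal (‖x - xbar j‖ ^ (-(q * α)))) ^ (a j / α) :=
          ENNReal.lintegral_prod_norm_pow_le _ (fun j _ => by fun_prop) hθ fun j _ => hθ0 j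
      _ ≤ ∏ j, ENNReal.ofReal (κ * r ^ n * (r + ‖c - xbar j‖) ^ (-(q * α))) ^ (a j / α) := by
          exact Finset.prod_le_prod' fun j _ =>
            ENNReal.rpow_le_rpow (hcube c (xbar j) r hr) (hθ0 j)
      _ = ENNReal.ofReal (κ * r ^ n * (∏ j, (r + ‖c - xbar j‖) ^ a j) ^ (-q)) := by
          rw [← ENNReal.ofReal_prod_rpow (fun j => by positivity) hθ0,
            Real.prod_rpow_rpow_neg_eq (fun j => by positivity) hα.ne']
          congr 1
          simp only [Real.mul_rpow (by positivity : 0 ≤ κ * r ^ n) (Real.rpow_nonneg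
            (by positivity : 0 ≤ r + ‖c - xbar _‖) _)]
          rw [Finset.prod_mul_distrib, ← Real.rpow_sum_of_pos (by positivity), hθ, Real.rpow_one]
  have hmeas : Measurable fun x => (∏ j, ‖x - xbar j‖ ^ a j) ^ (-q) :=
    (Finset.measurable_prod _ fun j _ => (measurable_id.sub_const _).norm.pow_const _).pow_const _
  rw [one_div, inv_mul_le_iff₀ (by positivity), ← mul_assoc, mul_comm (r ^ n),
    integral_eq_lintegral_of_nonneg_ae (ae_of_all _ fun x => by positivity)
      hmeas.aestronglyMeasurable]
  exact ENNReal.toReal_le_of_le_ofReal (by positivity) hL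

end Weight

theorem stmt5 (n m : ℕ) (hn : 3 ≤ n) (p : ℝ) (hp : (n : ℝ) < p)
    (α : ℝ) (hα : α = 1 - n / p)
    (xbar : Fin m → EuclideanSpace ℝ (Fin n)) (a : Fin m → ℝ)
    (ha : ∀ j, 0 ≤ a j) (hsum : ∑ j, a j = α)
    (w : EuclideanSpace ℝ (Fin n) → ℝ)
    (hw : ∀ x, w x = ∏ j, ‖x - xbar j‖ ^ a j) :
    ∃ C > 0, ∀ (c : EuclideanSpace ℝ (Fin n)) (r : ℝ), 0 < r →
      ((1 / r ^ n) * ∫ x in cube c r, (w x) ^ p) *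
        ((1 / r ^ n) * ∫ x in cube c r, (w x) ^ (-(p / (p - 1)))) ^ (p - 1) ≤ C := by
  obtain rfl : w = fun x => ∏ j, ‖x - xbar j‖ ^ a j := funext hw
  have hn0 : 0 < n := by omega
  have hn3 : (3 : ℝ) ≤ n := by exact_mod_cast hn
  have hp1 : 1 < p := by linarith
  have hα0 : 0 < ∑ j, a j := by rw [hsum, hα, sub_pos, div_lt_one (by linarith)]; exact hp
  have hqα : p / (p - 1) * ∑ j, a j < n := by
    rw [hsum, hα, div_mul_eq_mul_div, div_lt_iff₀ (by linarith), mul_sub,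
      mul_div_cancel₀ _ (by linarith)]
    nlinarith
  obtain ⟨κ, hκ, hneg⟩ := exists_cube_mean_prod_rpow_neg_le xbar hn0 ha hα0 (by positivity) hqα
  refine ⟨√n ^ (α * p) * κ ^ (p - 1), by positivity, fun c r hr => ?_⟩
  set T := ∏ j, (r + ‖c - xbar j‖) ^ a j
  have hT : 0 < T := Finset.prod_pos fun j _ => by positivity
  calc _ ≤ (√n ^ α * T) ^ p * (κ * T ^ (-(p / (p - 1)))) ^ (p - 1) := by
        gcongr ?_ * ?_ ^ _
        · exact hsum ▸ cube_mean_prod_rpow_le xbar hn0 ha (by linarith) c hr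
        · exact hneg c r hr
    _ = √n ^ (α * p) * κ ^ (p - 1) := by
        have hqp : -(p / (p - 1)) * (p - 1) = -p := by
          rw [neg_mul, div_mul_cancel₀ _ (by linarith)]
        rw [Real.mul_rpow (by positivity) hT.le, Real.mul_rpow hκ.le (by positivity),
          ← Real.rpow_mul (by positivity), ← Real.rpow_mul hT.le, hqp, Real.rpow_neg hT.le]
        field_simp
end

section
/- Let n ≥ 3, p > n, α = 1 - n/p, and w(x) = Π_{j=1}^m |x - x̄_j|^{α_j} with α_j ≥ 0, Σ α_j = α, x̄_j ∈ ℝ^n. Then for every q > n there is a constant c such that for all g ∈ L^∞(ℝ^n) with wg ∈ L^p(ℝ^n): ‖g‖_{L^q(ℝ^n)} ≤ c ‖wg‖_{L^p}^{n/q} ‖g‖_{L^∞}^{n(1/n - 1/q)}. -/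
open Real MeasureTheory ENNReal Set Metric

theorem stmt7 (n m : ℕ) (hn : 3 ≤ n) (p : ℝ) (hp : (n : ℝ) < p)
    (α : ℝ) (hα : α = 1 - n / p)
    (xbar : Fin m → EuclideanSpace ℝ (Fin n)) (a : Fin m → ℝ)
    (ha : ∀ j, 0 ≤ a j) (hsum : ∑ j, a j = α)
    (w : EuclideanSpace ℝ (Fin n) → ℝ)
    (hw : ∀ x, w x = ∏ j, ‖x - xbar j‖ ^ a j)
    (q : ℝ) (hq : (n : ℝ) < q) :
    ∃ c : ℝ≥0∞, c ≠ ⊤ ∧ ∀ g : EuclideanSpace ℝ (Fin n) → ℝ,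
      MemLp g ⊤ volume → MemLp (fun x => w x * g x) (ENNReal.ofReal p) volume →
      eLpNorm g (ENNReal.ofReal q) volume ≤
        c * eLpNorm (fun x => w x * g x) (ENNReal.ofReal p) volume ^ ((n : ℝ) / q) *
          eLpNorm g ⊤ volume ^ ((n : ℝ) * (1 / n - 1 / q)) := by
  have hn0 : (0:ℝ) < n := by
    have : (0:ℕ) < n := by omega
    exact_mod_cast this
  have hp0 : (0:ℝ) < p := hn0.trans hp
  have hq0 : (0:ℝ) < q := hn0.trans hq
  have hα0 : 0 < α := by
    rw [hα]
    have : (n:ℝ)/p < 1 := (div_lt_one hp0).2 hp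
    linarith
  set r : ℝ := p - n with hrdef
  have hr0 : 0 < r := by simp only [hrdef]; linarith
  -- m positive
  have hm : 0 < m := by
    by_contra h
    push_neg at h
    interval_cases m
    simp at hsum
    exact absurd hsum.symm (ne_of_gt hα0)
  haveI hFm : Nonempty (Fin m) := ⟨⟨0, hm⟩⟩
  haveI hEnt : Nontrivial (EuclideanSpace ℝ (Fin n)) := by
    have : 0 < Module.finrank ℝ (EuclideanSpace ℝ (Fin n)) := by
      rw [finrank_euclideanSpace_fin]; omega
    exact Module.nontrivial_of_finrank_pos this
  -- d : distance to nearest singular point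
  set d : EuclideanSpace ℝ (Fin n) → ℝ :=
    fun x => Finset.univ.inf' Finset.univ_nonempty (fun j => ‖x - xbar j‖) with hd
  have hd_nonneg : ∀ x, 0 ≤ d x := fun x =>
    Finset.le_inf' _ _ (fun j _ => norm_nonneg _)
  -- w basic facts
  have hw_nonneg : ∀ x, 0 ≤ w x := by
    intro x; rw [hw]
    exact Finset.prod_nonneg fun j _ => Real.rpow_nonneg (norm_nonneg _) _
  have hw_cont : Continuous w := by
    have h : Continuous fun x : EuclideanSpace ℝ (Fin n) => ∏ j, ‖x - xbar j‖ ^ a j := by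
      apply continuous_finset_prod
      intro j _
      exact (Real.continuous_rpow_const (ha j)).comp ((continuous_id.sub continuous_const).norm)
    exact (funext hw : w = _) ▸ h
  have hw_meas : Measurable w := hw_cont.measurable
  have hwp_meas : Measurable (fun x => ENNReal.ofReal (w x ^ p)) := by
    apply ENNReal.measurable_ofReal.comp
    exact (Real.continuous_rpow_const hp0.le).measurable.comp hw_meas
  have hsum' : (∑ i : Fin m, a i * p) = r := by
    rw [← Finset.sum_mul, hsum, hα, hrdef]; field_simp
  -- pointwise lower bound : d x ^ r ≤ w x ^ p
  have hw_lb : ∀ x, d x ^ r ≤ w x ^ p := by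
    intro x
    rcases eq_or_lt_of_le (hd_nonneg x) with h0 | hdx
    · rw [← h0, Real.zero_rpow hr0.ne']
      exact Real.rpow_nonneg (hw_nonneg x) _
    · have hdle : ∀ j, d x ≤ ‖x - xbar j‖ := by
        intro j
        exact Finset.inf'_le _ (Finset.mem_univ j)
      have h1 : w x ^ p = ∏ j, ‖x - xbar j‖ ^ (a j * p) := by
        rw [hw, ← Real.finset_prod_rpow _ _ (fun j _ => Real.rpow_nonneg (norm_nonneg _) _) p]
        congr 1
        ext j
        rw [← Real.rpow_mul (norm_nonneg _)]
      have h2 : ∀ j, d x ^ (a j * p) ≤ ‖x - xbar j‖ ^ (a j * p) := by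
        intro j
        exact Real.rpow_le_rpow (hd_nonneg x) (hdle j) (mul_nonneg (ha j) hp0.le)
      have h3 : d x ^ r = ∏ j, d x ^ (a j * p) := by
        have he : ∀ j : Fin m, d x ^ (a j * p) = Real.exp ((a j * p) * Real.log (d x)) := by
          intro j; rw [Real.rpow_def_of_pos hdx]; ring_nf
        simp only [he]
        rw [← Real.exp_sum, Real.rpow_def_of_pos hdx, ← Finset.sum_mul, ← Finset.sum_mul, hsum,
          hα]
        congr 1
        field_simp
        ring
      rw [h3, h1]
      exact Finset.prod_le_prod (fun j _ => Real.rpow_nonneg (hd_nonneg x) _)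
        (fun j _ => h2 j)
  -- a.e. positivity of w
  have hnull : volume (⋃ j : Fin m, {xbar j}) = 0 := by
    apply measure_iUnion_null
    intro j
    exact measure_singleton _
  have hw_pos : ∀ᵐ x : EuclideanSpace ℝ (Fin n) ∂volume, 0 < w x := by
    rw [ae_iff]
    refine measure_mono_null ?_ hnull
    intro x hx
    simp only [mem_setOf_eq, not_lt] at hx
    by_contra hmem
    simp only [mem_iUnion, mem_singleton_iff, not_exists] at hmem
    have hpos : 0 < w x := by
      rw [hw]
      apply Finset.prod_pos
      intro j _
      apply Real.rpow_pos_of_pos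
      rw [norm_pos_iff, sub_ne_zero]
      exact fun h => hmem j h
    exact absurd hpos (not_lt.2 hx)
  -- constants
  set κ : ℝ≥0∞ := volume (ball (0:EuclideanSpace ℝ (Fin n)) 1) with hκ
  have hκ_fin : κ ≠ ⊤ := (measure_ball_lt_top).ne
  set K : ℝ≥0∞ := (m : ℝ≥0∞) * κ + 1 with hK
  have hK_fin : K ≠ ⊤ := by
    simp only [hK]
    exact (ENNReal.add_lt_top.2 ⟨ENNReal.mul_lt_top (by simp) hκ_fin.lt_top, one_lt_top⟩).ne
  have hK0 : K ≠ 0 := by simp [hK]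
  -- KEY LEMMA B: measure of a set vs weighted integral
  have hB : ∀ S : Set (EuclideanSpace ℝ (Fin n)),
      volume S ≤ K * (∫⁻ x in S, ENNReal.ofReal (w x ^ p)) ^ ((n:ℝ)/p) := by
    intro S
    set I := ∫⁻ x in S, ENNReal.ofReal (w x ^ p) with hI
    have key : ∀ t : ℝ, 0 < t →
        volume S ≤ (m : ℝ≥0∞) * κ * ENNReal.ofReal t ^ (n:ℝ) + ENNReal.ofReal t ^ (-r) * I := by
      intro t ht
      have hsplit : volume S ≤ volume (S ∩ {x | d x < t}) + volume (S ∩ {x | t ≤ d x}) := by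
        refine le_trans (measure_mono ?_) (measure_union_le _ _)
        intro x hx
        rcases lt_or_ge (d x) t with h | h
        · exact Or.inl ⟨hx, h⟩
        · exact Or.inr ⟨hx, h⟩
      have h2 : volume (S ∩ {x | d x < t}) ≤ (m : ℝ≥0∞) * κ * ENNReal.ofReal t ^ (n:ℝ) := by
        have hsub : S ∩ {x | d x < t} ⊆ ⋃ j : Fin m, ball (xbar j) t := by
          rintro x ⟨-, hx⟩
          simp only [mem_setOf_eq, hd] at hx
          rw [Finset.inf'_lt_iff] at hx
          obtain ⟨j, -, hj⟩ := hx
          exact mem_iUnion.2 ⟨j, by rwa [mem_ball, dist_eq_norm]⟩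
        refine le_trans (measure_mono hsub) (le_trans (measure_iUnion_fintype_le _ _) ?_)
        have hball : ∀ j : Fin m, volume (ball (xbar j) t) = ENNReal.ofReal t ^ (n:ℝ) * κ := by
          intro j
          rw [Measure.addHaar_ball volume (xbar j) ht.le]
          congr 1
          rw [ENNReal.ofReal_pow ht.le, ENNReal.rpow_natCast]
          congr 1
          rw [finrank_euclideanSpace_fin]
        simp only [hball, Finset.sum_const, Finset.card_univ, Fintype.card_fin, nsmul_eq_mul]
        rw [mul_comm (ENNReal.ofReal t ^ (n:ℝ)) κ, ← mul_assoc]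
      have h3 : volume (S ∩ {x | t ≤ d x}) ≤ ENNReal.ofReal t ^ (-r) * I := by
        set T := S ∩ {x | t ≤ d x} with hT
        have hc : ENNReal.ofReal t ^ r * volume T ≤ I := by
          have hint : ENNReal.ofReal t ^ r * volume T = ∫⁻ _ in T, ENNReal.ofReal t ^ r := by
            rw [setLIntegral_const]
          rw [hint]
          refine le_trans (setLIntegral_mono hwp_meas ?_)
            (lintegral_mono_set (by exact inter_subset_left))
          intro x hx
          have hxt : t ≤ d x := hx.2
          rw [ENNReal.ofReal_rpow_of_pos ht]
          apply ENNReal.ofReal_le_ofReal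
          exact le_trans (Real.rpow_le_rpow ht.le hxt hr0.le) (hw_lb x)
        have hne : ENNReal.ofReal t ^ r ≠ 0 :=
          (ENNReal.rpow_pos (by simpa using ht) (by simp)).ne'
        have hnt : ENNReal.ofReal t ^ r ≠ ⊤ :=
          ENNReal.rpow_ne_top_of_nonneg hr0.le ofReal_ne_top
        calc volume T = (ENNReal.ofReal t ^ r)⁻¹ * (ENNReal.ofReal t ^ r * volume T) := by
              rw [← mul_assoc, ENNReal.inv_mul_cancel hne hnt, one_mul]
          _ ≤ (ENNReal.ofReal t ^ r)⁻¹ * I := mul_le_mul_right hc _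
          _ = ENNReal.ofReal t ^ (-r) * I := by rw [ENNReal.rpow_neg]
      exact le_trans hsplit (add_le_add h2 h3)
    rcases eq_or_ne I 0 with hI0 | hIne
    · have hz : volume S = 0 := by
        have h1 : (fun x => ENNReal.ofReal (w x ^ p)) =ᵐ[volume.restrict S] 0 :=
          (lintegral_eq_zero_iff hwp_meas).1 hI0
        have h2 : ∀ᵐ x ∂volume.restrict S, 0 < w x := ae_restrict_of_ae hw_pos
        have h3 : ∀ᵐ _x ∂volume.restrict S, False := by
          filter_upwards [h1, h2] with x hx1 hx2
          have hwp : 0 < w x ^ p := Real.rpow_pos_of_pos hx2 p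
          simp only [Pi.zero_apply, ENNReal.ofReal_eq_zero] at hx1
          linarith
        rw [ae_iff] at h3
        simp only [not_false_eq_true, setOf_true] at h3
        rwa [Measure.restrict_apply_univ] at h3
      simp [hz]
    rcases eq_or_ne I ⊤ with hItop | hIfin
    · rw [hItop, ENNReal.top_rpow_of_pos (by positivity), ENNReal.mul_top hK0]
      exact le_top
    · set t : ℝ := I.toReal ^ ((1:ℝ)/p) with htdef
      have hIt : 0 < I.toReal := ENNReal.toReal_pos hIne hIfin
      have ht : 0 < t := Real.rpow_pos_of_pos hIt _
      have hoft : ENNReal.ofReal t = I ^ ((1:ℝ)/p) := by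
        rw [htdef, ← ENNReal.ofReal_rpow_of_pos hIt, ENNReal.ofReal_toReal hIfin]
      calc volume S ≤ (m : ℝ≥0∞) * κ * ENNReal.ofReal t ^ (n:ℝ) + ENNReal.ofReal t ^ (-r) * I :=
            key t ht
        _ = (m : ℝ≥0∞) * κ * I ^ ((n:ℝ)/p) + I ^ ((n:ℝ)/p) := by
            congr 1
            · congr 1
              rw [hoft, ← ENNReal.rpow_mul]
              congr 1
              field_simp
            · rw [hoft, ← ENNReal.rpow_mul]
              nth_rewrite 2 [← ENNReal.rpow_one I]
              rw [← ENNReal.rpow_add _ _ hIne hIfin]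
              congr 1
              rw [hrdef]
              field_simp
              ring
        _ = K * I ^ ((n:ℝ)/p) := by rw [hK, add_mul, one_mul]
  -- MAIN PART
  set C : ℝ≥0∞ := ENNReal.ofReal q * K * ENNReal.ofReal (1/(q-(n:ℝ))) with hC
  have hC_fin : C ≠ ⊤ := by
    simp only [hC]
    exact (ENNReal.mul_lt_top (ENNReal.mul_lt_top ofReal_lt_top hK_fin.lt_top)
      ofReal_lt_top).ne
  refine ⟨C ^ ((1:ℝ)/q), ENNReal.rpow_ne_top_of_nonneg (by positivity) hC_fin, ?_⟩
  intro g hg hgp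
  set g' := hg.1.mk g with hg'def
  have hgg' : g =ᵐ[volume] g' := hg.1.ae_eq_mk
  have hg'meas : Measurable g' := hg.1.stronglyMeasurable_mk.measurable
  set A := eLpNorm (fun x => w x * g x) (ENNReal.ofReal p) volume with hA
  set M := eLpNorm g ⊤ volume with hM
  have hA_fin : A ≠ ⊤ := hgp.2.ne
  have hM_fin : M ≠ ⊤ := hg.2.ne
  have hAn_fin : A ^ (n:ℝ) ≠ ⊤ := ENNReal.rpow_ne_top_of_nonneg hn0.le hA_fin
  have hofp0 : ENNReal.ofReal p ≠ 0 := by simp [ENNReal.ofReal_eq_zero, hp0, not_le]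
  have hofq0 : ENNReal.ofReal q ≠ 0 := by simp [ENNReal.ofReal_eq_zero, hq0, not_le]
  have hwg' : (fun x => w x * g x) =ᵐ[volume] (fun x => w x * g' x) := by
    filter_upwards [hgg'] with x hx
    rw [hx]
  -- the p-integral equals A^p
  have hIp : ∫⁻ x, (‖w x * g' x‖₊ : ℝ≥0∞) ^ p ∂volume = A ^ p := by
    have h1 : A = (∫⁻ x, (‖w x * g' x‖₊ : ℝ≥0∞) ^ p ∂volume) ^ ((1:ℝ)/p) := by
      rw [hA, eLpNorm_congr_ae hwg',
        eLpNorm_eq_lintegral_rpow_enorm_toReal hofp0 ofReal_ne_top,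
        ENNReal.toReal_ofReal hp0.le]
      simp only [enorm_eq_nnnorm]
    rw [h1, ← ENNReal.rpow_mul, one_div, inv_mul_cancel₀ hp0.ne', ENNReal.rpow_one]
  -- Chebyshev-type bound
  have cheb : ∀ lam : ℝ, 0 < lam →
      volume {x | lam < |g' x|} ≤ K * A ^ (n:ℝ) * ENNReal.ofReal lam ^ (-(n:ℝ)) := by
    intro lam hlam
    set S := {x | lam < |g' x|} with hS
    have hlamp_ne : ENNReal.ofReal lam ^ p ≠ 0 :=
      (ENNReal.rpow_pos (by simpa using hlam) ofReal_ne_top).ne'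
    have hlamp_fin : ENNReal.ofReal lam ^ p ≠ ⊤ :=
      ENNReal.rpow_ne_top_of_nonneg hp0.le ofReal_ne_top
    have hIS : ENNReal.ofReal lam ^ p * (∫⁻ x in S, ENNReal.ofReal (w x ^ p)) ≤ A ^ p := by
      rw [← hIp]
      calc ENNReal.ofReal lam ^ p * ∫⁻ x in S, ENNReal.ofReal (w x ^ p)
          = ∫⁻ x in S, ENNReal.ofReal lam ^ p * ENNReal.ofReal (w x ^ p) :=
            (lintegral_const_mul' _ _ hlamp_fin).symm
        _ ≤ ∫⁻ x in S, (‖w x * g' x‖₊ : ℝ≥0∞) ^ p := by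
            refine setLIntegral_mono ?_ ?_
            · have : Measurable fun x => w x * g' x := hw_meas.mul hg'meas
              fun_prop
            · intro x hx
              have hxl : lam < |g' x| := hx
              rw [← ENNReal.ofReal_rpow_of_nonneg (hw_nonneg x) hp0.le,
                ← ENNReal.mul_rpow_of_nonneg _ _ hp0.le, ← ENNReal.ofReal_mul hlam.le,
                ← enorm_eq_nnnorm, Real.enorm_eq_ofReal_abs]
              refine ENNReal.rpow_le_rpow (ENNReal.ofReal_le_ofReal ?_) hp0.le
              rw [abs_mul, abs_of_nonneg (hw_nonneg x)]
              calc lam * w x ≤ |g' x| * w x :=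
                    mul_le_mul_of_nonneg_right hxl.le (hw_nonneg x)
                _ = w x * |g' x| := mul_comm _ _
        _ ≤ ∫⁻ x, (‖w x * g' x‖₊ : ℝ≥0∞) ^ p ∂volume := setLIntegral_le_lintegral _ _
    have hIS' : (∫⁻ x in S, ENNReal.ofReal (w x ^ p)) ≤ ENNReal.ofReal lam ^ (-p) * A ^ p := by
      calc (∫⁻ x in S, ENNReal.ofReal (w x ^ p))
          = (ENNReal.ofReal lam ^ p)⁻¹ *
            (ENNReal.ofReal lam ^ p * ∫⁻ x in S, ENNReal.ofReal (w x ^ p)) := by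
            rw [← mul_assoc, ENNReal.inv_mul_cancel hlamp_ne hlamp_fin, one_mul]
        _ ≤ (ENNReal.ofReal lam ^ p)⁻¹ * A ^ p := mul_le_mul_right hIS _
        _ = ENNReal.ofReal lam ^ (-p) * A ^ p := by rw [ENNReal.rpow_neg]
    calc volume S ≤ K * (∫⁻ x in S, ENNReal.ofReal (w x ^ p)) ^ ((n:ℝ)/p) := hB S
      _ ≤ K * (ENNReal.ofReal lam ^ (-p) * A ^ p) ^ ((n:ℝ)/p) :=
          mul_le_mul_right (ENNReal.rpow_le_rpow hIS' (by positivity)) _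
      _ = K * A ^ (n:ℝ) * ENNReal.ofReal lam ^ (-(n:ℝ)) := by
          rw [ENNReal.mul_rpow_of_nonneg _ _ (by positivity : (0:ℝ) ≤ (n:ℝ)/p),
            ← ENNReal.rpow_mul, ← ENNReal.rpow_mul]
          have e1 : -p * ((n:ℝ)/p) = -(n:ℝ) := by rw [neg_mul, mul_comm, div_mul_cancel₀ _ hp0.ne']
          have e2 : p * ((n:ℝ)/p) = (n:ℝ) := by rw [mul_comm, div_mul_cancel₀ _ hp0.ne']
          rw [e1, e2, mul_comm (ENNReal.ofReal lam ^ (-(n:ℝ))) (A ^ (n:ℝ)), ← mul_assoc]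
  -- essential sup bound
  set M₀ : ℝ := M.toReal with hM₀def
  have hM₀nn : 0 ≤ M₀ := ENNReal.toReal_nonneg
  have hbound : ∀ᵐ x ∂(volume : Measure (EuclideanSpace ℝ (Fin n))), |g' x| ≤ M₀ := by
    have h2 : eLpNormEssSup g' volume = M := by
      rw [hM, ← eLpNorm_exponent_top, ← eLpNorm_congr_ae hgg']
    filter_upwards [ae_le_eLpNormEssSup (f := g') (μ := volume)] with x hx
    rw [h2] at hx
    have hx' : ENNReal.ofReal |g' x| ≤ M := by rwa [← Real.enorm_eq_ofReal_abs]
    calc |g' x| = (ENNReal.ofReal |g' x|).toReal := (ENNReal.toReal_ofReal (abs_nonneg _)).symm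
      _ ≤ M.toReal := ENNReal.toReal_mono hM_fin hx'
  -- layer cake formula
  have hlayer : ∫⁻ x, ENNReal.ofReal (|g' x| ^ q) ∂volume =
      ENNReal.ofReal q * ∫⁻ t in Ioi (0:ℝ),
        volume {x | t < |g' x|} * ENNReal.ofReal (t ^ (q-1)) := by
    have hgi : ∀ t > (0:ℝ), IntervalIntegrable (fun s : ℝ => q * s ^ (q-1)) volume 0 t :=
      fun t _ => (intervalIntegral.intervalIntegrable_rpow' (by linarith)).const_mul q
    have hgnn : ∀ᵐ t ∂volume.restrict (Ioi (0:ℝ)), 0 ≤ q * t ^ (q-1) := by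
      refine (ae_restrict_iff' measurableSet_Ioi).2 (Filter.Eventually.of_forall fun t ht => ?_)
      have ht' : (0:ℝ) < t := ht
      positivity
    have hcomp := lintegral_comp_eq_lintegral_meas_lt_mul volume
      (f := fun x => |g' x|) (g := fun s => q * s ^ (q-1))
      (Filter.Eventually.of_forall fun x => abs_nonneg _) hg'meas.abs.aemeasurable hgi hgnn
    have hprim : ∀ s : ℝ, 0 ≤ s → ∫ t in (0:ℝ)..s, q * t ^ (q-1) = s ^ q := by
      intro s hs
      rw [intervalIntegral.integral_const_mul, integral_rpow (Or.inl (by linarith))]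
      have e1 : q - 1 + 1 = q := by ring
      rw [e1, Real.zero_rpow hq0.ne']
      field_simp
      simp
    calc ∫⁻ x, ENNReal.ofReal (|g' x| ^ q) ∂volume
        = ∫⁻ x, ENNReal.ofReal (∫ t in (0:ℝ)..|g' x|, q * t ^ (q-1)) ∂volume := by
          congr 1
          ext x
          rw [hprim _ (abs_nonneg _)]
      _ = ∫⁻ t in Ioi (0:ℝ), volume {x | t < |g' x|} * ENNReal.ofReal (q * t ^ (q-1)) := hcomp
      _ = ENNReal.ofReal q * ∫⁻ t in Ioi (0:ℝ),
            volume {x | t < |g' x|} * ENNReal.ofReal (t ^ (q-1)) := by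
          rw [← lintegral_const_mul' _ _ ofReal_ne_top]
          congr 1
          ext t
          rw [ENNReal.ofReal_mul hq0.le]
          ring
  -- bound the t-integral
  have hIoi : ∫⁻ t in Ioi (0:ℝ), volume {x | t < |g' x|} * ENNReal.ofReal (t ^ (q-1)) ≤
      K * A ^ (n:ℝ) * ∫⁻ t in Ioc (0:ℝ) M₀, ENNReal.ofReal (t ^ (q-1-n)) := by
    have hptw : ∀ t ∈ Ioi (0:ℝ), volume {x | t < |g' x|} * ENNReal.ofReal (t ^ (q-1)) ≤
        (Ioc (0:ℝ) M₀).indicator (fun t => K * A ^ (n:ℝ) * ENNReal.ofReal (t ^ (q-1-n))) t := by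
      intro t ht
      have ht' : (0:ℝ) < t := ht
      rcases le_or_gt t M₀ with hle | hgt
      · rw [indicator_of_mem (Set.mem_Ioc.2 ⟨ht', hle⟩)]
        calc volume {x | t < |g' x|} * ENNReal.ofReal (t ^ (q-1))
            ≤ K * A ^ (n:ℝ) * ENNReal.ofReal t ^ (-(n:ℝ)) * ENNReal.ofReal (t ^ (q-1)) :=
              mul_le_mul_left (cheb t ht') _
          _ = K * A ^ (n:ℝ) * ENNReal.ofReal (t ^ (q-1-n)) := by
              rw [mul_assoc (K * A ^ (n:ℝ)), ENNReal.ofReal_rpow_of_pos ht']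
              congr 1
              rw [← ENNReal.ofReal_mul (by positivity), ← Real.rpow_add ht']
              congr 1
              ring
      · rw [indicator_of_notMem (by simp [mem_Ioc, not_and_or]; intro _; linarith)]
        have hnull2 : volume {x | t < |g' x|} = 0 := by
          have hsub : {x | t < |g' x|} ⊆ {x | ¬ |g' x| ≤ M₀} := by
            intro x hx
            simp only [mem_setOf_eq, not_le]
            exact hgt.trans hx
          exact measure_mono_null hsub (ae_iff.1 hbound)
        simp [hnull2]
    calc ∫⁻ t in Ioi (0:ℝ), volume {x | t < |g' x|} * ENNReal.ofReal (t ^ (q-1))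
        ≤ ∫⁻ t in Ioi (0:ℝ), (Ioc (0:ℝ) M₀).indicator
            (fun t => K * A ^ (n:ℝ) * ENNReal.ofReal (t ^ (q-1-n))) t := by
          refine setLIntegral_mono ?_ hptw
          refine Measurable.indicator ?_ measurableSet_Ioc
          fun_prop
      _ = ∫⁻ t in Ioc (0:ℝ) M₀, K * A ^ (n:ℝ) * ENNReal.ofReal (t ^ (q-1-n)) := by
          rw [lintegral_indicator measurableSet_Ioc, Measure.restrict_restrict measurableSet_Ioc,
            inter_eq_self_of_subset_left Ioc_subset_Ioi_self]
      _ = K * A ^ (n:ℝ) * ∫⁻ t in Ioc (0:ℝ) M₀, ENNReal.ofReal (t ^ (q-1-n)) :=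
          lintegral_const_mul' _ _ (ENNReal.mul_ne_top hK_fin hAn_fin)
  -- compute the remaining integral
  have hJ : ∫⁻ t in Ioc (0:ℝ) M₀, ENNReal.ofReal (t ^ (q-1-n)) ≤
      ENNReal.ofReal (1/(q-(n:ℝ))) * M ^ (q-(n:ℝ)) := by
    have hint : IntegrableOn (fun t : ℝ => t ^ (q-1-n)) (Ioc 0 M₀) volume := by
      have h := intervalIntegral.intervalIntegrable_rpow' (a := 0) (b := M₀)
        (r := q-1-n) (by linarith)
      rwa [intervalIntegrable_iff_integrableOn_Ioc_of_le hM₀nn] at h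
    have hnn : 0 ≤ᵐ[volume.restrict (Ioc (0:ℝ) M₀)] fun t : ℝ => t ^ (q-1-n) := by
      refine (ae_restrict_iff' measurableSet_Ioc).2 (Filter.Eventually.of_forall fun t ht => ?_)
      exact Real.rpow_nonneg ht.1.le _
    rw [← ofReal_integral_eq_lintegral_ofReal hint hnn]
    have hval : ∫ t in Ioc (0:ℝ) M₀, t ^ (q-1-n) = M₀ ^ (q-(n:ℝ)) * (1/(q-(n:ℝ))) := by
      rw [← intervalIntegral.integral_of_le hM₀nn,
        integral_rpow (Or.inl (by linarith : (-1:ℝ) < q-1-n))]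
      have e1 : q - 1 - n + 1 = q - (n:ℝ) := by ring
      rw [e1, Real.zero_rpow (by linarith : q - (n:ℝ) ≠ 0)]
      field_simp
      simp
    rw [hval, ENNReal.ofReal_mul (by positivity), mul_comm]
    apply mul_le_mul_right
    rw [← ENNReal.ofReal_rpow_of_nonneg hM₀nn (by linarith : (0:ℝ) ≤ q - (n:ℝ)),
      hM₀def, ENNReal.ofReal_toReal hM_fin]
  -- combine everything
  have hmain : ∫⁻ x, (‖g' x‖₊ : ℝ≥0∞) ^ q ∂volume ≤ C * A ^ (n:ℝ) * M ^ (q-(n:ℝ)) := by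
    have hptw : ∀ x, (‖g' x‖₊ : ℝ≥0∞) ^ q = ENNReal.ofReal (|g' x| ^ q) := fun x => by
      rw [← enorm_eq_nnnorm, Real.enorm_eq_ofReal_abs, ENNReal.ofReal_rpow_of_nonneg (abs_nonneg _) hq0.le]
    simp only [hptw]
    rw [hlayer]
    calc ENNReal.ofReal q * ∫⁻ t in Ioi (0:ℝ),
          volume {x | t < |g' x|} * ENNReal.ofReal (t ^ (q-1))
        ≤ ENNReal.ofReal q *
            (K * A ^ (n:ℝ) * (ENNReal.ofReal (1/(q-(n:ℝ))) * M ^ (q-(n:ℝ)))) :=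
          mul_le_mul_right (le_trans hIoi (mul_le_mul_right hJ _)) _
      _ = C * A ^ (n:ℝ) * M ^ (q-(n:ℝ)) := by
          rw [hC]
          ring
  have hLHS : eLpNorm g (ENNReal.ofReal q) volume =
      (∫⁻ x, (‖g' x‖₊ : ℝ≥0∞) ^ q ∂volume) ^ ((1:ℝ)/q) := by
    rw [eLpNorm_congr_ae hgg', eLpNorm_eq_lintegral_rpow_enorm_toReal hofq0 ofReal_ne_top,
      ENNReal.toReal_ofReal hq0.le]
    simp only [enorm_eq_nnnorm]
  rw [hLHS]
  calc (∫⁻ x, (‖g' x‖₊ : ℝ≥0∞) ^ q ∂volume) ^ ((1:ℝ)/q)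
      ≤ (C * A ^ (n:ℝ) * M ^ (q-(n:ℝ))) ^ ((1:ℝ)/q) :=
        ENNReal.rpow_le_rpow hmain (by positivity)
    _ = C ^ ((1:ℝ)/q) * A ^ ((n:ℝ)/q) * M ^ ((n:ℝ) * (1/(n:ℝ) - 1/q)) := by
        rw [ENNReal.mul_rpow_of_nonneg _ _ (by positivity : (0:ℝ) ≤ 1/q),
          ENNReal.mul_rpow_of_nonneg _ _ (by positivity : (0:ℝ) ≤ 1/q),
          ← ENNReal.rpow_mul, ← ENNReal.rpow_mul]
        congr 2
        · field_simp
        · field_simp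
end
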